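/- arXiv:1310.7445 — 3 statements merged into one kernel-verified Lean document; each statement's English description precedes it below -/
import Mathlib

section
/- Let p be a prime and G a finite group. The p-decomposable residual of G (the smallest normal subgroup N such that G/N is the direct product of its Sylow p-subgroup and a normal p-complement, i.e., every p-element of G/N commutes with every p'-element) is generated by all commutators [a,b] where a ∈ G is a p-element and b ∈ G is an element of prime power order coprime to p. -/
open Subgroup Pointwise
open scoped commutatorElement

/-- `H` is a normal subgroup of `K` (both viewed as subgroups of the ambient group `G`). -/
def NormalIn {G : Type*} [Group G] (H K : Subgroup G) : Prop :=
  H ≤ K ∧ ∀ k ∈ K, ∀ h ∈ H, k * h * k⁻¹ ∈ H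

/-- `H` is subnormal in `K`: there is a chain `H = c 0 ⊴ c 1 ⊴ ... ⊴ c n = K`. -/
def SubnormalIn {G : Type*} [Group G] (H K : Subgroup G) : Prop :=
  ∃ (n : ℕ) (c : ℕ → Subgroup G), c 0 = H ∧ c n = K ∧ ∀ i < n, NormalIn (c i) (c (i + 1))

/-- The hypercenter: the limit of the upper central series. -/
def hypercenter (G : Type*) [Group G] : Subgroup G := ⨆ n, Subgroup.upperCentralSeries G n

/-- The nilpotent residual: the intersection of all normal subgroups with nilpotent quotient. -/
def nilpotentResidual (G : Type*) [Group G] : Subgroup G :=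
  ⨅ N ∈ {N : Subgroup G |
    ∃ h : N.Normal, @Group.IsNilpotent (G ⧸ N) (@QuotientGroup.Quotient.group G _ N h)}, N

/-- The Fitting subgroup: the join of all normal nilpotent subgroups. -/
def fitting (G : Type*) [Group G] : Subgroup G :=
  ⨆ N ∈ {N : Subgroup G | N.Normal ∧ Group.IsNilpotent N}, N

/-- `N` is a minimal normal subgroup. -/
def IsMinimalNormal {G : Type*} [Group G] (N : Subgroup G) : Prop :=
  N.Normal ∧ N ≠ ⊥ ∧ ∀ K : Subgroup G, K.Normal → K ≤ N → K = ⊥ ∨ K = N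

/-- The socle: the join of all minimal normal subgroups. -/
def socle (G : Type*) [Group G] : Subgroup G :=
  ⨆ N ∈ {N : Subgroup G | IsMinimalNormal N}, N

/-- A group is supersolvable if it has a chain of normal subgroups with cyclic factors. -/
def IsSupersolvable (G : Type*) [Group G] : Prop :=
  ∃ (n : ℕ) (c : ℕ → Subgroup G), c 0 = ⊥ ∧ c n = ⊤ ∧ (∀ i, (c i).Normal) ∧
    ∀ i < n, c i ≤ c (i + 1) ∧ ∃ g : G, c (i + 1) = c i ⊔ Subgroup.zpowers g

/-- A subgroup `H` is pronormal if `H` and each conjugate `H^g` are conjugate in their join. -/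
def Pronormal {G : Type*} [Group G] (H : Subgroup G) : Prop :=
  ∀ g : G, ∃ x ∈ H ⊔ H.map (MulAut.conj g).toMonoidHom,
    H.map (MulAut.conj g).toMonoidHom = H.map (MulAut.conj x).toMonoidHom

/-- A subgroup `H` is abnormal if `g ∈ ⟨H, H^g⟩` for all `g`. -/
def Abnormal {G : Type*} [Group G] (H : Subgroup G) : Prop :=
  ∀ g : G, g ∈ H ⊔ H.map (MulAut.conj g).toMonoidHom

/-- `Δ(G)`: the intersection of all abnormal maximal subgroups. -/
def abnormalDelta (G : Type*) [Group G] : Subgroup G :=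
  ⨅ M ∈ {M : Subgroup G | IsCoatom M ∧ Abnormal M}, M

/-- The generalized Fitting subgroup `F̃(G)`: the preimage of `Soc(G/Φ(G))` in `G`. -/
def genFitting (G : Type*) [Group G] : Subgroup G :=
  (socle (G ⧸ frattini G)).comap (QuotientGroup.mk' (frattini G))

/-- A group is `p`-decomposable if every `p`-element commutes with every `p'`-element. -/
def IsPDecomposable (p : ℕ) (K : Type*) [Group K] : Prop :=
  ∀ a b : K, (∃ n, orderOf a = p ^ n) → Nat.Coprime (orderOf b) p → Commute a b

/-!
The generating set is closed under conjugation, so `N` is normal. Both remaining claims follow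
from: for a surjection `f : G → Q` of finite groups, `Q` is `p`-decomposable iff these
commutators lie in `ker f`. Forward is immediate, as `f` maps `p`-elements to `p`-elements and
`q`-elements to `q`-elements. Conversely, a `p`-element of `Q` lifts to a `p`-element of `G` (the
`p`-primary part of any preimage), and likewise for `q`-elements; and a `p'`-element of `Q` is a
product of commuting powers of itself of prime power order, so it commutes with a `p`-element as
soon as its primary parts do.
-/

section OrderDecomposition

variable {G : Type*} [Group G]

lemma exists_zpow_mul_zpow_eq_self_of_coprime {g : G} {m n : ℕ} (h : orderOf g = m * n)
    (hmn : m.Coprime n) :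
    ∃ i j : ℤ, g ^ i * g ^ j = g ∧ orderOf (g ^ i) ∣ m ∧ orderOf (g ^ j) ∣ n := by
  have hbezout : (m : ℤ) * m.gcdA n + n * m.gcdB n = 1 := by
    rw [← Nat.gcd_eq_gcd_ab, hmn, Nat.cast_one]
  refine ⟨n * m.gcdB n, m * m.gcdA n, ?_, ?_, ?_⟩
  · rw [← zpow_add, add_comm, hbezout, zpow_one]
  · rw [orderOf_dvd_iff_pow_eq_one, ← zpow_natCast, ← zpow_mul, ← orderOf_dvd_iff_zpow_eq_one, h]
    exact ⟨m.gcdB n, by push_cast; ring⟩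
  · rw [orderOf_dvd_iff_pow_eq_one, ← zpow_natCast, ← zpow_mul, ← orderOf_dvd_iff_zpow_eq_one, h]
    exact ⟨m.gcdA n, by push_cast; ring⟩

lemma IsOfFinOrder.exists_zpow_mul_zpow_eq_self_primePow_coprime {g : G} (hg : IsOfFinOrder g)
    {q : ℕ} (hq : q.Prime) :
    ∃ i j : ℤ, g ^ i * g ^ j = g ∧ (∃ k, orderOf (g ^ i) = q ^ k) ∧ (orderOf (g ^ j)).Coprime q := by
  have hcompl := Nat.coprime_ordCompl hq hg.orderOf_pos.ne'
  obtain ⟨i, j, hg, hi, hj⟩ := exists_zpow_mul_zpow_eq_self_of_coprime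
    (Nat.ordProj_mul_ordCompl_eq_self (orderOf g) q).symm (hcompl.pow_left _)
  obtain ⟨k, -, hk⟩ := (Nat.dvd_prime_pow hq).mp hi
  exact ⟨i, j, hg, ⟨k, hk⟩, hcompl.symm.coprime_dvd_left hj⟩

lemma exists_orderOf_primePow_map_eq {Q : Type*} [Group Q] (f : G →* Q) {g : G}
    (hg : IsOfFinOrder g) {q : ℕ} (hq : q.Prime) (hfg : ∃ n, orderOf (f g) = q ^ n) :
    ∃ c : G, f c = f g ∧ ∃ k, orderOf c = q ^ k := by
  obtain ⟨i, j, hij, hi, hj⟩ := hg.exists_zpow_mul_zpow_eq_self_primePow_coprime hq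
  obtain ⟨n, hn⟩ := hfg
  have hfj : f (g ^ j) = 1 := by
    rw [← orderOf_eq_one_iff]
    refine Nat.eq_one_of_dvd_coprimes (hj.pow_right n) (orderOf_map_dvd f _) ?_
    rw [map_zpow, ← hn]
    exact orderOf_dvd_of_mem_zpowers (zpow_mem_zpowers _ _)
  exact ⟨g ^ i, by rw [← congrArg f hij, map_mul, hfj, mul_one], hi⟩

lemma IsOfFinOrder.mem_of_forall_primePow_mem (H : Subgroup G) {g : G} (hg : IsOfFinOrder g)
    (h : ∀ x ∈ zpowers g, IsPrimePow (orderOf x) → x ∈ H) : g ∈ H := by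
  induction hN : orderOf g using Nat.strong_induction_on generalizing g with
  | _ N ih =>
    rcases eq_or_ne (orderOf g) 1 with h1 | h1
    · rw [orderOf_eq_one_iff.mp h1]
      exact H.one_mem
    have hq := Nat.minFac_prime h1
    obtain ⟨i, j, hij, ⟨k, hi⟩, hj⟩ := hg.exists_zpow_mul_zpow_eq_self_primePow_coprime hq
    rw [← hij]
    refine H.mul_mem ?_ ?_
    · rcases k.eq_zero_or_pos with rfl | hk
      · rw [orderOf_eq_one_iff.mp (hi.trans (pow_zero _))]
        exact H.one_mem
      · exact h _ (zpow_mem_zpowers _ _)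
          ((isPrimePow_nat_iff _).mpr ⟨_, k, hq, hk, hi.symm⟩)
    · have hjg : orderOf (g ^ j) ∣ orderOf g := orderOf_dvd_of_mem_zpowers (zpow_mem_zpowers _ _)
      have hlt : orderOf (g ^ j) < N := by
        refine hN ▸ lt_of_le_of_ne (Nat.le_of_dvd hg.orderOf_pos hjg) fun he => hq.one_lt.ne' ?_
        exact Nat.eq_one_of_dvd_coprimes hj (he ▸ Nat.minFac_dvd _) dvd_rfl
      exact ih _ hlt hg.zpow (fun x hx => h x (zpowers_le.mpr (zpow_mem_zpowers _ _) hx)) rfl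

end OrderDecomposition

lemma isPDecomposable_of_commute_primePow {K : Type*} [Group K] [Finite K] {p : ℕ}
    (h : ∀ a b : K, (∃ n, orderOf a = p ^ n) →
      (∃ q n, q.Prime ∧ q ≠ p ∧ orderOf b = q ^ n) → Commute a b) :
    IsPDecomposable p K := by
  intro a b ha hb
  refine (mem_centralizer_singleton_iff.mp ?_).symm
  refine (isOfFinOrder_of_finite b).mem_of_forall_primePow_mem _ fun x hx hx_pow => ?_
  obtain ⟨q, k, hq, hk, hqk⟩ := (isPrimePow_nat_iff _).mp hx_pow
  have hqp : q ≠ p := by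
    rintro rfl
    have hqx : q ∣ orderOf x := hqk ▸ dvd_pow_self q hk.ne'
    exact hq.ne_one
      ((hb.coprime_dvd_left (hqx.trans (orderOf_dvd_of_mem_zpowers hx))).eq_one_of_dvd dvd_rfl)
  exact mem_centralizer_singleton_iff.mpr (h a x ha ⟨q, k, hq, hqp, hqk.symm⟩).eq.symm

section PPrimeCommutators

variable (p : ℕ) (G : Type*) [Group G]

def pPrimeCommutators : Set G :=
  {x | ∃ a b : G, (∃ n, orderOf a = p ^ n) ∧
    (∃ q n, Nat.Prime q ∧ q ≠ p ∧ orderOf b = q ^ n) ∧ x = ⁅a, b⁆}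

variable {p G}

lemma map_mem_pPrimeCommutators {H : Type*} [Group H] (e : G ≃* H) {x : G}
    (hx : x ∈ pPrimeCommutators p G) : e x ∈ pPrimeCommutators p H := by
  obtain ⟨a, b, ha, hb, rfl⟩ := hx
  refine ⟨e a, e b, ?_, ?_, map_commutatorElement e a b⟩ <;> simpa only [MulEquiv.orderOf_eq]

variable (p G)

lemma normal_closure_pPrimeCommutators : (closure (pPrimeCommutators p G)).Normal :=
  normalizer_eq_top_iff.mp <| top_le_iff.mp <| le_normalizer_closure_iff.mpr
    fun g _ _ hx => subset_closure (map_mem_pPrimeCommutators (MulAut.conj g) hx)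

variable {p G}

lemma isPDecomposable_iff_closure_pPrimeCommutators_le_ker [Finite G] {Q : Type*} [Group Q]
    (hp : p.Prime) {f : G →* Q} (hf : Function.Surjective f) :
    IsPDecomposable p Q ↔ closure (pPrimeCommutators p G) ≤ f.ker := by
  constructor
  · intro hQ
    rw [closure_le]
    rintro _ ⟨a, b, ⟨n, ha⟩, ⟨q, m, hq, hqp, hb⟩, rfl⟩
    obtain ⟨k, -, hfa⟩ := (Nat.dvd_prime_pow hp).mp (ha ▸ orderOf_map_dvd f a)
    have hfb : (orderOf (f b)).Coprime p :=
      (((Nat.coprime_primes hq hp).mpr hqp).pow_left m).coprime_dvd_left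
        (hb ▸ orderOf_map_dvd f b)
    rw [SetLike.mem_coe, MonoidHom.mem_ker, map_commutatorElement,
      commutatorElement_eq_one_iff_commute]
    exact hQ _ _ ⟨k, hfa⟩ hfb
  · intro hker
    have : Finite Q := Finite.of_surjective f hf
    refine isPDecomposable_of_commute_primePow fun a b ha ⟨q, m, hq, hqp, hb⟩ => ?_
    obtain ⟨a, rfl⟩ := hf a
    obtain ⟨b, rfl⟩ := hf b
    obtain ⟨a', ha'f, ha'⟩ := exists_orderOf_primePow_map_eq f (isOfFinOrder_of_finite a) hp ha
    obtain ⟨b', hb'f, k, hb'⟩ :=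
      exists_orderOf_primePow_map_eq f (isOfFinOrder_of_finite b) hq ⟨m, hb⟩
    have hcomm := hker (subset_closure ⟨a', b', ha', ⟨q, k, hq, hqp, hb'⟩, rfl⟩)
    rwa [MonoidHom.mem_ker, map_commutatorElement, commutatorElement_eq_one_iff_commute, ha'f,
      hb'f] at hcomm

end PPrimeCommutators

theorem pDecomposable_residual_eq_closure_commutators {G : Type*} [Group G] [Finite G]
    (p : ℕ) (hp : p.Prime) :
    ∃ hN : (Subgroup.closure {x : G | ∃ a b : G, (∃ n, orderOf a = p ^ n) ∧
        (∃ q n, Nat.Prime q ∧ q ≠ p ∧ orderOf b = q ^ n) ∧ x = ⁅a, b⁆}).Normal,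
      (@IsPDecomposable p
        (G ⧸ Subgroup.closure {x : G | ∃ a b : G, (∃ n, orderOf a = p ^ n) ∧
          (∃ q n, Nat.Prime q ∧ q ≠ p ∧ orderOf b = q ^ n) ∧ x = ⁅a, b⁆})
        (@QuotientGroup.Quotient.group G _ _ hN)) ∧
      ∀ M : Subgroup G, ∀ hM : M.Normal,
        @IsPDecomposable p (G ⧸ M) (@QuotientGroup.Quotient.group G _ M hM) →
          Subgroup.closure {x : G | ∃ a b : G, (∃ n, orderOf a = p ^ n) ∧
            (∃ q n, Nat.Prime q ∧ q ≠ p ∧ orderOf b = q ^ n) ∧ x = ⁅a, b⁆} ≤ M := by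
  have hN := normal_closure_pPrimeCommutators p G
  refine ⟨hN, ?_, fun M _ hM_dec => ?_⟩
  · exact (isPDecomposable_iff_closure_pPrimeCommutators_le_ker hp
      (QuotientGroup.mk'_surjective (closure (pPrimeCommutators p G)))).mpr
      (QuotientGroup.ker_mk' _).ge
  · exact ((isPDecomposable_iff_closure_pPrimeCommutators_le_ker hp
      (QuotientGroup.mk'_surjective M)).mp hM_dec).trans (QuotientGroup.ker_mk' M).le
end

section
/- Let G be a finite group. If H is a normal nilpotent subgroup of G with C_G(H) ≤ H and H is contained in the hypercenter Z_∞(G), then G is nilpotent. -/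
open Subgroup Pointwise

/-- Three subgroups lemma with normal target. -/
private theorem aux_three_subgroups {G : Type*} [Group G] {A B C M : Subgroup G} [M.Normal]
    (h1 : ⁅⁅B, C⁆, A⁆ ≤ M) (h2 : ⁅⁅C, A⁆, B⁆ ≤ M) : ⁅⁅A, B⁆, C⁆ ≤ M := by
  let π := QuotientGroup.mk' M
  have key : ∀ X Y Z : Subgroup G, ⁅⁅X, Y⁆, Z⁆ ≤ M ↔
      ⁅⁅X.map π, Y.map π⁆, Z.map π⁆ = ⊥ := by
    intro X Y Z
    rw [← map_commutator, ← map_commutator, Subgroup.map_eq_bot_iff, QuotientGroup.ker_mk']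
  rw [key] at h1 h2 ⊢
  exact commutator_commutator_eq_bot_of_rotate h1 h2

private theorem aux_ucs_comm_top {G : Type*} [Group G] (i : ℕ) :
    ⁅Subgroup.upperCentralSeries G i, ⊤⁆ ≤ Subgroup.upperCentralSeries G (i - 1) := by
  cases i with
  | zero => simp
  | succ i =>
    rw [commutator_le]
    intro x hx y _
    simpa [commutatorElement_def] using (Subgroup.mem_upperCentralSeries_succ_iff.mp hx) y

private theorem aux_ucs_comm_lcs {G : Type*} [Group G] (k i : ℕ) :
    ⁅Subgroup.upperCentralSeries G i, Subgroup.lowerCentralSeries (⊤ : Subgroup G) k⁆ ≤ Subgroup.upperCentralSeries G (i - (k + 1)) := by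
  induction k generalizing i with
  | zero => simpa using aux_ucs_comm_top (G := G) i
  | succ k ih =>
    show ⁅Subgroup.upperCentralSeries G i, ⁅Subgroup.lowerCentralSeries (⊤ : Subgroup G) k, ⊤⁆⁆ ≤ _
    rw [commutator_comm]
    apply aux_three_subgroups
    · calc ⁅⁅(⊤ : Subgroup G), Subgroup.upperCentralSeries G i⁆, Subgroup.lowerCentralSeries (⊤ : Subgroup G) k⁆
          ≤ ⁅Subgroup.upperCentralSeries G (i - 1), Subgroup.lowerCentralSeries (⊤ : Subgroup G) k⁆ := by
            apply commutator_mono _ le_rfl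
            rw [commutator_comm]; exact aux_ucs_comm_top i
        _ ≤ Subgroup.upperCentralSeries G (i - 1 - (k + 1)) := ih _
        _ ≤ Subgroup.upperCentralSeries G (i - (k + 1 + 1)) := by
            apply Subgroup.upperCentralSeries_mono; omega
    · calc ⁅⁅Subgroup.upperCentralSeries G i, Subgroup.lowerCentralSeries (⊤ : Subgroup G) k⁆, (⊤ : Subgroup G)⁆
          ≤ ⁅Subgroup.upperCentralSeries G (i - (k + 1)), ⊤⁆ := commutator_mono (ih i) le_rfl
        _ ≤ Subgroup.upperCentralSeries G (i - (k + 1) - 1) := aux_ucs_comm_top _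
        _ ≤ Subgroup.upperCentralSeries G (i - (k + 1 + 1)) := by
            apply Subgroup.upperCentralSeries_mono; omega

private theorem aux_hypercenter_eq_ucs (G : Type*) [Group G] [Finite G] :
    ∃ n, (⨆ m, Subgroup.upperCentralSeries G m) = Subgroup.upperCentralSeries G n := by
  have hstab : ∃ n, Subgroup.upperCentralSeries G n = Subgroup.upperCentralSeries G (n + 1) := by
    by_contra h
    push_neg at h
    have : StrictMono (Subgroup.upperCentralSeries G) :=
      strictMono_nat_of_lt_succ fun n =>
        lt_of_le_of_ne (Subgroup.upperCentralSeries_mono G (Nat.le_succ n)) (h n)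
    exact Finite.exists_ne_map_eq_of_infinite (Subgroup.upperCentralSeries G) |>.elim
        fun a h => h.elim fun b ⟨hne, heq⟩ => hne (this.injective heq)
  obtain ⟨n, hn⟩ := hstab
  refine ⟨n, le_antisymm (iSup_le fun m => ?_) (le_iSup _ n)⟩
  have key : ∀ k, Subgroup.upperCentralSeries G (n + k) = Subgroup.upperCentralSeries G n := by
    intro k
    induction k with
    | zero => rfl
    | succ k ih =>
      rw [hn]
      ext x
      rw [show n + (k + 1) = (n + k) + 1 from rfl, Subgroup.mem_upperCentralSeries_succ_iff,
        Subgroup.mem_upperCentralSeries_succ_iff, ih]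
  rcases le_or_gt m n with hm | hm
  · exact Subgroup.upperCentralSeries_mono G hm
  · exact le_of_eq (by rw [show m = n + (m - n) by omega, key])

theorem isNilpotent_of_selfcentralizing_in_hypercenter {G : Type*} [Group G] [Finite G]
    (H : Subgroup G) (hH : H.Normal) (hnil : Group.IsNilpotent H)
    (hcent : Subgroup.centralizer (H : Set G) ≤ H)
    (hhyp : H ≤ hypercenter G) : Group.IsNilpotent G := by
  obtain ⟨n, hn⟩ := aux_hypercenter_eq_ucs G
  rw [show hypercenter G = ⨆ m, Subgroup.upperCentralSeries G m from rfl] at hhyp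
  rw [hn] at hhyp
  -- L_n centralizes Z_n
  have h1 : ⁅Subgroup.lowerCentralSeries (⊤ : Subgroup G) n, Subgroup.upperCentralSeries G n⁆ = ⊥ := by
    rw [eq_bot_iff, commutator_comm]
    simpa using aux_ucs_comm_lcs n n
  have h2 : Subgroup.lowerCentralSeries (⊤ : Subgroup G) n ≤ Subgroup.upperCentralSeries G n := by
    calc Subgroup.lowerCentralSeries (⊤ : Subgroup G) n
        ≤ Subgroup.centralizer (Subgroup.upperCentralSeries G n : Set G) :=
          (Subgroup.commutator_eq_bot_iff_le_centralizer).mp h1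
      _ ≤ Subgroup.centralizer (H : Set G) := Subgroup.centralizer_le hhyp
      _ ≤ H := hcent
      _ ≤ Subgroup.upperCentralSeries G n := hhyp
  have h3 : ∀ k, Subgroup.lowerCentralSeries (⊤ : Subgroup G) (n + k) ≤ Subgroup.upperCentralSeries G (n - k) := by
    intro k
    induction k with
    | zero => simpa using h2
    | succ k ih =>
      calc Subgroup.lowerCentralSeries (⊤ : Subgroup G) (n + (k + 1))
          = ⁅Subgroup.lowerCentralSeries (⊤ : Subgroup G) (n + k), ⊤⁆ := rfl
        _ ≤ ⁅Subgroup.upperCentralSeries G (n - k), ⊤⁆ := commutator_mono ih le_rfl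
        _ ≤ Subgroup.upperCentralSeries G (n - k - 1) := aux_ucs_comm_top _
        _ ≤ Subgroup.upperCentralSeries G (n - (k + 1)) := by apply Subgroup.upperCentralSeries_mono; omega
  rw [Subgroup.nilpotent_iff_lowerCentralSeries]
  exact ⟨n + n, le_bot_iff.mp (by simpa using h3 n)⟩
end

section
/- Let G be a finite group that is the product G = A·B where A is a subnormal supersolvable subgroup and B is a normal nilpotent subgroup. Then G is supersolvable. -/
open Subgroup Pointwise

/-!
Induct on `|G|`, first for `A` normal. A minimal normal subgroup `N` of `G` inside `Z(B)` is
centralized by `B`. If `N ∩ A = 1`, then `A` centralizes `N` too, so `N` is central and hence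
cyclic. Otherwise `N ≤ A`, and since `G = A·C_G(N)` every `A`-invariant subgroup of `N` is normal
in `G`; so `N` meets each term of a cyclic normal series of `A` trivially or lies in it, and
therefore embeds in one cyclic factor. Either way `G` has a nontrivial cyclic normal subgroup,
and the hypotheses pass to the quotient by it. For `A` subnormal, climb the subnormal series:
each term `H ⊴ M` satisfies `M = H·(B ∩ M)`.
-/
namespace IsSupersolvable

variable {G H : Type*} [Group G] [Group H]

theorem of_surjective (h : IsSupersolvable G) (f : G →* H) (hf : Function.Surjective f) :
    IsSupersolvable H := by
  obtain ⟨n, c, h0, hn, hnormal, hstep⟩ := h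
  refine ⟨n, fun i => (c i).map f, by simp [h0], by simp [hn, map_top_of_surjective f hf],
    fun i => (hnormal i).map f hf, fun i hi => ?_⟩
  obtain ⟨hle, g, hg⟩ := hstep i hi
  exact ⟨map_mono hle, f g, by simp only [hg, Subgroup.map_sup, MonoidHom.map_zpowers]⟩

theorem of_mulEquiv (h : IsSupersolvable G) (e : G ≃* H) : IsSupersolvable H :=
  h.of_surjective e.toMonoidHom e.surjective

theorem of_quotient {N : Subgroup G} [N.Normal] [IsCyclic N] (h : IsSupersolvable (G ⧸ N)) :
    IsSupersolvable G := by
  obtain ⟨n, c, h0, hn, hnormal, hstep⟩ := h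
  obtain ⟨z, hz⟩ := N.isCyclic_iff_exists_zpowers_eq_top.mp ‹_›
  let π := QuotientGroup.mk' N
  have hπ : Function.Surjective π := QuotientGroup.mk'_surjective N
  refine ⟨n + 1, fun | 0 => ⊥ | j + 1 => (c j).comap π, rfl, by simp [hn], ?_, ?_⟩
  · rintro (_ | j)
    · exact normal_bot
    · exact (hnormal j).comap π
  · rintro (_ | j) hj
    · refine ⟨bot_le, z, ?_⟩
      simp [h0, hz, π]
    · obtain ⟨hle, g, hg⟩ := hstep j (by omega)
      obtain ⟨g, rfl⟩ := hπ g
      refine ⟨comap_mono hle, g, ?_⟩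
      have hker : π.ker ≤ (c j).comap π ⊔ zpowers g :=
        le_sup_of_le_left (MonoidHom.ker_le_comap _ _)
      change (c (j + 1)).comap π = _
      rw [hg, ← map_comap_eq_self_of_surjective hπ (c j), ← MonoidHom.map_zpowers,
        ← Subgroup.map_sup, comap_map_eq, sup_eq_left.mpr hker]

end IsSupersolvable

section Cyclic

variable {G : Type*} [Group G]

theorem Subgroup.isCyclic_of_disjoint_of_le_sup_zpowers {N K : Subgroup G} [K.Normal] {g : G}
    (hdisj : Disjoint N K) (hle : N ≤ K ⊔ zpowers g) : IsCyclic N := by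
  let π := QuotientGroup.mk' K
  have hinj : Function.Injective (π.domRestrict N) := by
    rw [← MonoidHom.ker_eq_bot_iff, MonoidHom.ker_domRestrict, QuotientGroup.ker_mk',
      subgroupOf_eq_bot]
    exact hdisj.symm
  have hrange : (π.domRestrict N).range ≤ zpowers (π g) := by
    rw [MonoidHom.domRestrict_range]
    refine (map_mono hle).trans ?_
    rw [Subgroup.map_sup, QuotientGroup.map_mk'_self, bot_sup_eq, MonoidHom.map_zpowers]
  have := isCyclic_of_le hrange
  exact isCyclic_of_injective (π.domRestrict N).rangeRestrict
    (MonoidHom.rangeRestrict_injective_iff.mpr hinj)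

theorem IsSupersolvable.isCyclic_of_forall_normal_disjoint_or_le (h : IsSupersolvable G)
    (N : Subgroup G) (hN : ∀ K : Subgroup G, K.Normal → Disjoint N K ∨ N ≤ K) : IsCyclic N := by
  obtain ⟨n, c, h0, hn, hnormal, hstep⟩ := h
  suffices ∀ i ≤ n, N ≤ c i → IsCyclic N from this n le_rfl (hn ▸ le_top)
  intro i
  induction i with
  | zero =>
    intro _ hle
    exact isCyclic_of_le (h0 ▸ hle)
  | succ i ih =>
    intro hi hle
    have := hnormal i
    obtain ⟨-, g, hg⟩ := hstep i hi
    rcases hN (c i) (hnormal i) with hdisj | hle'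
    · exact isCyclic_of_disjoint_of_le_sup_zpowers hdisj (hg ▸ hle)
    · exact ih (by omega) hle'

end Cyclic

section MinimalNormal

variable {G : Type*} [Group G]

theorem exists_isMinimalNormal_le [Finite G] {C : Subgroup G} (hC : C.Normal) (hC' : C ≠ ⊥) :
    ∃ N ≤ C, IsMinimalNormal N := by
  obtain ⟨N, hNC, ⟨hN, hN'⟩, hmin⟩ :=
    exists_minimal_le_of_wellFoundedLT (fun N : Subgroup G => N.Normal ∧ N ≠ ⊥) C ⟨hC, hC'⟩
  refine ⟨N, hNC, hN, hN', fun K hK hKN => ?_⟩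
  by_cases hK' : K = ⊥
  · exact .inl hK'
  · exact .inr (le_antisymm hKN (hmin ⟨hK, hK'⟩ hKN))

theorem Subgroup.normal_of_le_normalizer_of_sup_centralizer_eq_top {K N H : Subgroup G}
    (hKN : K ≤ N) (hH : H ≤ normalizer K) (hHN : H ⊔ centralizer N = ⊤) : K.Normal := by
  rw [← normalizer_eq_top_iff, eq_top_iff, ← hHN]
  exact sup_le hH ((centralizer_le hKN).trans (centralizer_le_normalizer _))

theorem IsMinimalNormal.isCyclic_of_le_center {N : Subgroup G} (hN : IsMinimalNormal N)
    (hcenter : N ≤ center G) : IsCyclic N := by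
  obtain ⟨⟨z, hzN⟩, hz⟩ := ne_bot_iff_exists_ne_one.mp hN.2.1
  have hzpow : (zpowers z).Normal := by
    refine normal_of_le_normalizer_of_sup_centralizer_eq_top (H := ⊥)
      (zpowers_le.mpr hzN) bot_le ?_
    rwa [bot_sup_eq, centralizer_eq_top_iff_subset]
  rcases hN.2.2 _ hzpow (zpowers_le.mpr hzN) with hbot | heq
  · exact absurd (zpowers_eq_bot.mp hbot) (by simpa using hz)
  · exact heq ▸ inferInstance

theorem IsMinimalNormal.isCyclic_of_le {N A : Subgroup G} (hN : IsMinimalNormal N)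
    (hA : IsSupersolvable A) (hNA : N ≤ A) (hAN : A ⊔ centralizer N = ⊤) : IsCyclic N := by
  have := hN.1
  suffices IsCyclic (N.subgroupOf A) from
    isCyclic_of_surjective _ (subgroupOfEquivOfLe hNA).surjective
  refine hA.isCyclic_of_forall_normal_disjoint_or_le _ fun K hK => ?_
  set X := N.subgroupOf A ⊓ K
  have hXA : (X.map A.subtype).subgroupOf A = X :=
    comap_map_eq_self_of_injective A.subtype_injective X
  have hXN : X.map A.subtype ≤ N :=
    (map_mono inf_le_left).trans ((subgroupOf_map_subtype N A).trans_le inf_le_left)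
  have hXnormal : (X.map A.subtype).Normal := by
    refine normal_of_le_normalizer_of_sup_centralizer_eq_top hXN ?_ hAN
    rw [← normal_subgroupOf_iff_le_normalizer (map_subtype_le X), hXA]
    infer_instance
  rcases hN.2.2 _ hXnormal hXN with hbot | heq
  · left
    rw [disjoint_iff, ← map_eq_bot_iff_of_injective _ A.subtype_injective]
    exact hbot
  · right
    have : X = N.subgroupOf A := by rw [← hXA, heq]
    exact this ▸ inf_le_right

end MinimalNormal

section Product

variable {G : Type*} [Group G]

theorem exists_normal_isCyclic_ne_bot_of_sup_eq_top [Finite G] {A B : Subgroup G} [A.Normal]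
    [B.Normal] [Group.IsNilpotent B] (hA : IsSupersolvable A) (hB : B ≠ ⊥) (hAB : A ⊔ B = ⊤) :
    ∃ N : Subgroup G, N.Normal ∧ N ≠ ⊥ ∧ IsCyclic N := by
  have : Nontrivial B := (nontrivial_iff_ne_bot B).mpr hB
  let C := (center B).map B.subtype
  have hC : C ≠ ⊥ := by
    rw [Ne, map_eq_bot_iff_of_injective _ B.subtype_injective]
    exact Group.IsNilpotent.center_ne_bot B
  have hCB : C ≤ centralizer B := by
    rintro _ ⟨z, hz, rfl⟩
    exact mem_centralizer_iff.mpr fun b hb => congrArg Subtype.val (mem_center_iff.mp hz ⟨b, hb⟩)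
  obtain ⟨N, hNC, hN⟩ := exists_isMinimalNormal_le inferInstance hC
  have hBN : B ≤ centralizer N := le_centralizer_iff.mp (hNC.trans hCB)
  refine ⟨N, hN.1, hN.2.1, ?_⟩
  have := hN.1
  rcases hN.2.2 (N ⊓ A) inferInstance inf_le_left with hdisj | hNA
  · have hAN : A ≤ centralizer N := fun a ha => mem_centralizer_iff.mpr fun n hn =>
      (commute_of_normal_of_disjoint N A hN.1 ‹_› (disjoint_iff.mpr hdisj) n a hn ha).eq
    refine hN.isCyclic_of_le_center (centralizer_eq_top_iff_subset.mp ?_)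
    exact top_le_iff.mp (hAB ▸ sup_le hAN hBN)
  · exact hN.isCyclic_of_le hA (hNA ▸ inf_le_right) (top_le_iff.mp (hAB ▸ sup_le_sup_left hBN A))

theorem isSupersolvable_of_sup_eq_top_of_normal_of_isNilpotent [Finite G] {A B : Subgroup G}
    [A.Normal] [B.Normal] [Group.IsNilpotent B] (hA : IsSupersolvable A) (hAB : A ⊔ B = ⊤) :
    IsSupersolvable G := by
  induction h : Nat.card G using Nat.strong_induction_on generalizing G with
  | _ n ih =>
  by_cases hB : B = ⊥
  · rw [hB, sup_bot_eq] at hAB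
    exact hA.of_mulEquiv ((MulEquiv.subgroupCongr hAB).trans topEquiv)
  obtain ⟨N, hN, hN', hcyc⟩ := exists_normal_isCyclic_ne_bot_of_sup_eq_top hA hB hAB
  let π := QuotientGroup.mk' N
  have hπ : Function.Surjective π := QuotientGroup.mk'_surjective N
  have : (A.map π).Normal := (‹A.Normal›).map π hπ
  have : (B.map π).Normal := (‹B.Normal›).map π hπ
  have : Group.IsNilpotent (B.map π) := Group.nilpotent_of_surjective _ (π.subgroupMap_surjective B)
  have hcard : Nat.card (G ⧸ N) < n := by
    rw [← h, card_eq_card_quotient_mul_card_subgroup N]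
    exact lt_mul_of_one_lt_right Nat.card_pos ((one_lt_card_iff_ne_bot N).mpr hN')
  refine IsSupersolvable.of_quotient (N := N) (ih _ hcard (A := A.map π) (B := B.map π)
    (hA.of_surjective _ (π.subgroupMap_surjective A)) ?_ rfl)
  rw [← Subgroup.map_sup, hAB, map_top_of_surjective π hπ]

end Product

section Subnormal

variable {G : Type*} [Group G]

theorem Subgroup.subgroupOf_sup_subgroupOf_eq_top {H B M : Subgroup G} (hHM : H ≤ M)
    (hHB : (H : Set G) * (B : Set G) = Set.univ) : H.subgroupOf M ⊔ B.subgroupOf M = ⊤ := by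
  rw [← inf_subgroupOf_right B M, ← subgroupOf_sup hHM inf_le_right, subgroupOf_eq_top]
  intro x hx
  have hx' : x ∈ (H : Set G) * ↑(B ⊓ M) := by
    rw [mul_inf_assoc H B M hHM, hHB]
    exact ⟨trivial, hx⟩
  obtain ⟨h, hh, b, hb, rfl⟩ := hx'
  exact mul_mem_sup hh hb

instance Subgroup.isNilpotent_subgroupOf {B : Subgroup G} [Group.IsNilpotent B] (M : Subgroup G) :
    Group.IsNilpotent (B.subgroupOf M) := by
  refine isNilpotent_of_ker_le_center
    ((M.subtype.comp (B.subgroupOf M).subtype).codRestrict B fun x => x.2) fun x hx => ?_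
  have hx1 : ((x : M) : G) = 1 := congrArg Subtype.val (MonoidHom.mem_ker.mp hx)
  have : x = 1 := Subtype.ext (Subtype.ext hx1)
  exact this ▸ one_mem _

theorem isSupersolvable_of_normalIn [Finite G] {H M B : Subgroup G} [B.Normal]
    [Group.IsNilpotent B] (hHM : NormalIn H M) (hH : IsSupersolvable H)
    (hHB : (H : Set G) * (B : Set G) = Set.univ) : IsSupersolvable M := by
  have : (H.subgroupOf M).Normal := ⟨fun h hh k => hHM.2 k k.2 h hh⟩
  exact isSupersolvable_of_sup_eq_top_of_normal_of_isNilpotent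
    (hH.of_mulEquiv (subgroupOfEquivOfLe hHM.1).symm)
    (subgroupOf_sup_subgroupOf_eq_top hHM.1 hHB)

end Subnormal

theorem isSupersolvable_of_product_subnormal_supersolvable_normal_nilpotent
    {G : Type*} [Group G] [Finite G] (A B : Subgroup G)
    (hA : SubnormalIn A ⊤) (hAs : IsSupersolvable A)
    (hB : B.Normal) (hBnil : Group.IsNilpotent B)
    (hprod : (A : Set G) * (B : Set G) = Set.univ) :
    IsSupersolvable G := by
  obtain ⟨n, c, hc0, hcn, hchain⟩ := hA
  have hsupersolvable : ∀ i ≤ n, A ≤ c i ∧ IsSupersolvable (c i) := by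
    intro i
    induction i with
    | zero => exact fun _ => ⟨hc0.ge, hc0 ▸ hAs⟩
    | succ i ih =>
      intro hi
      obtain ⟨hAc, hc⟩ := ih (by omega)
      have hcB : (c i : Set G) * (B : Set G) = Set.univ :=
        Set.eq_univ_of_subset (Set.mul_subset_mul_right hAc) hprod
      exact ⟨hAc.trans (hchain i hi).1, isSupersolvable_of_normalIn (hchain i hi) hc hcB⟩
  exact (hsupersolvable n le_rfl).2.of_mulEquiv ((MulEquiv.subgroupCongr hcn).trans topEquiv)
end
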